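/- arXiv:2408.02194 — 3 statements merged into one kernel-verified Lean document; each statement's English description precedes it below -/
import Mathlib

section
/- The curvature of the adjoint A-connection ∇^A satisfies curv_{∇^A}(s₁,s₂)(s) = −R^{bas}(s₁,s₂)(♯s), i.e., ∇^A_{s₁}∇^A_{s₂}s − ∇^A_{s₂}∇^A_{s₁}s − ∇^A_{[s₁,s₂]}s = −R^{bas}(s₁,s₂)(♯s) for all s, s₁, s₂ ∈ A. -/
theorem stmt_6
    {R : Type*} [CommRing R] [Algebra ℝ R]
    {A : Type*} [AddCommGroup A] [Module R A] [Module ℝ A] [IsScalarTower ℝ R A]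
    (br : A → A → A)
    (anchor : A →ₗ[R] Derivation ℝ R R)
    (hbr_add_left : ∀ x y z : A, br (x + y) z = br x z + br y z)
    (hbr_add_right : ∀ x y z : A, br x (y + z) = br x y + br x z)
    (hbr_smul_left : ∀ (r : ℝ) (x y : A), br (r • x) y = r • br x y)
    (hbr_smul_right : ∀ (r : ℝ) (x y : A), br x (r • y) = r • br x y)
    (hbr_skew : ∀ x y : A, br x y = - br y x)
    (hbr_jacobi : ∀ x y z : A, br x (br y z) = br (br x y) z + br y (br x z))
    (hbr_leibniz : ∀ (f : R) (x y : A), br x (f • y) = f • br x y + (anchor x) f • y)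
    (hanchor_br : ∀ x y : A, anchor (br x y) = ⁅anchor x, anchor y⁆)
    (conn : Derivation ℝ R R → A → A)
    (hconn_addX : ∀ (X Y : Derivation ℝ R R) (s : A), conn (X + Y) s = conn X s + conn Y s)
    (hconn_smulX : ∀ (f : R) (X : Derivation ℝ R R) (s : A), conn (f • X) s = f • conn X s)
    (hconn_addS : ∀ (X : Derivation ℝ R R) (s t : A), conn X (s + t) = conn X s + conn X t)
    (hconn_leibniz : ∀ (X : Derivation ℝ R R) (f : R) (s : A), conn X (f • s) = f • conn X s + X f • s)
    (nablaA : A → A → A)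
    (hnablaA : ∀ s₁ s₂ : A, nablaA s₁ s₂ = conn (anchor s₂) s₁ + br s₁ s₂)
    (Rbas : A → A → Derivation ℝ R R → A)
    (hRbas : ∀ (s₁ s₂ : A) (X : Derivation ℝ R R),
      Rbas s₁ s₂ X = conn X (br s₁ s₂) - br (conn X s₁) s₂ - br s₁ (conn X s₂)
        - conn (anchor (conn X s₂) + ⁅anchor s₂, X⁆) s₁
        + conn (anchor (conn X s₁) + ⁅anchor s₁, X⁆) s₂)
    :
    ∀ s s₁ s₂ : A,
      nablaA s₁ (nablaA s₂ s) - nablaA s₂ (nablaA s₁ s) - nablaA (br s₁ s₂) s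
        = - Rbas s₁ s₂ (anchor s) := by
  intro s s₁ s₂
  simp only [hnablaA, hRbas, map_add, hanchor_br, hconn_addX, hbr_add_right]
  rw [hbr_jacobi s₁ s₂ s, hbr_skew s₂ (conn (anchor s) s₁)]
  abel
end

section
/- Let ∂ : A → C and ♯^C : C → Der(R) be R-linear maps, and □ : A × C → C an ℝ-bilinear map satisfying □_{fs}v = f□_s v − ♯^C(v)(f)·∂(s) and □_s(fv) = f□_s v + ♯(s)(f)·v. Define ε₀(s₁,s₂) := □_{s₁}∂(s₂) − ∂([s₁,s₂]). Then ε₀ is R-linear in its second argument, i.e., ε₀(s₁, f s₂) = f ε₀(s₁,s₂), while ε₀(f s₁, s₂) − f ε₀(s₁,s₂) = (♯(s₂) − ♯^C(∂ s₂))(f)·∂(s₁). -/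
theorem stmt_8
    {R : Type*} [CommRing R] [Algebra ℝ R]
    {A : Type*} [AddCommGroup A] [Module R A] [Module ℝ A] [IsScalarTower ℝ R A]
    (br : A → A → A)
    (anchor : A →ₗ[R] Derivation ℝ R R)
    (hbr_add_left : ∀ x y z : A, br (x + y) z = br x z + br y z)
    (hbr_add_right : ∀ x y z : A, br x (y + z) = br x y + br x z)
    (hbr_smul_left : ∀ (r : ℝ) (x y : A), br (r • x) y = r • br x y)
    (hbr_smul_right : ∀ (r : ℝ) (x y : A), br x (r • y) = r • br x y)
    (hbr_skew : ∀ x y : A, br x y = - br y x)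
    (hbr_jacobi : ∀ x y z : A, br x (br y z) = br (br x y) z + br y (br x z))
    (hbr_leibniz : ∀ (f : R) (x y : A), br x (f • y) = f • br x y + (anchor x) f • y)
    {C : Type*} [AddCommGroup C] [Module R C] [Module ℝ C] [IsScalarTower ℝ R C]
    (pa : A →ₗ[R] C)
    (sharpC : C →ₗ[R] Derivation ℝ R R)
    (box : A → C → C)
    (hbox_add_left : ∀ (x y : A) (v : C), box (x + y) v = box x v + box y v)
    (hbox_add_right : ∀ (x : A) (v w : C), box x (v + w) = box x v + box x w)
    (hbox_smul_left : ∀ (r : ℝ) (x : A) (v : C), box (r • x) v = r • box x v)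
    (hbox_smul_right : ∀ (r : ℝ) (x : A) (v : C), box x (r • v) = r • box x v)
    (hbox_leibniz_left : ∀ (f : R) (s : A) (v : C),
      box (f • s) v = f • box s v - (sharpC v) f • pa s)
    (hbox_leibniz_right : ∀ (f : R) (s : A) (v : C),
      box s (f • v) = f • box s v + (anchor s) f • v)
    :
    ∀ (f : R) (s₁ s₂ : A),
      box s₁ (pa (f • s₂)) - pa (br s₁ (f • s₂))
        = f • (box s₁ (pa s₂) - pa (br s₁ s₂)) ∧
      (box (f • s₁) (pa s₂) - pa (br (f • s₁) s₂))
          - f • (box s₁ (pa s₂) - pa (br s₁ s₂))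
        = ((anchor s₂) f - (sharpC (pa s₂)) f) • pa s₁ := by
  intro f s₁ s₂
  have hbr : br s₁ (f • s₂) = f • br s₁ s₂ + (anchor s₁) f • s₂ := hbr_leibniz f s₁ s₂
  have hbr2 : br (f • s₁) s₂ = f • br s₁ s₂ - (anchor s₂) f • s₁ := by
    rw [hbr_skew, hbr_leibniz, hbr_skew s₂ s₁]
    module
  constructor
  · rw [map_smul, hbox_leibniz_right, hbr, map_add, map_smul, map_smul]
    module
  · rw [hbox_leibniz_left, hbr2, map_sub, map_smul, map_smul, sub_smul]
    module
end

section
/- Assume the Lie higher algebroid conditions: ♯ = ♯^C ∘ ∂, ♯^C(□_s v) = [♯s, ♯^C v], □_{s₁}∂s₂ = ∂[s₁,s₂], and flatness □_{[s₁,s₂]}v = □_{s₁}□_{s₂}v − □_{s₂}□_{s₁}v. Then the curvature of ∇^C satisfies ∇^C_{s₁}∇^C_{s₂}v − ∇^C_{s₂}∇^C_{s₁}v − ∇^C_{[s₁,s₂]}v = −∂(R^{bas}(s₁,s₂)(♯^C v)) for all s₁, s₂ ∈ A and v ∈ C. -/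
theorem stmt_13
    {R : Type*} [CommRing R] [Algebra ℝ R]
    {A : Type*} [AddCommGroup A] [Module R A] [Module ℝ A] [IsScalarTower ℝ R A]
    (br : A → A → A)
    (anchor : A →ₗ[R] Derivation ℝ R R)
    (hbr_add_left : ∀ x y z : A, br (x + y) z = br x z + br y z)
    (hbr_add_right : ∀ x y z : A, br x (y + z) = br x y + br x z)
    (hbr_smul_left : ∀ (r : ℝ) (x y : A), br (r • x) y = r • br x y)
    (hbr_smul_right : ∀ (r : ℝ) (x y : A), br x (r • y) = r • br x y)
    (hbr_skew : ∀ x y : A, br x y = - br y x)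
    (hbr_jacobi : ∀ x y z : A, br x (br y z) = br (br x y) z + br y (br x z))
    (hbr_leibniz : ∀ (f : R) (x y : A), br x (f • y) = f • br x y + (anchor x) f • y)
    (hanchor_br : ∀ x y : A, anchor (br x y) = ⁅anchor x, anchor y⁆)
    {C : Type*} [AddCommGroup C] [Module R C] [Module ℝ C] [IsScalarTower ℝ R C]
    (pa : A →ₗ[R] C)
    (sharpC : C →ₗ[R] Derivation ℝ R R)
    (box : A → C → C)
    (hbox_add_left : ∀ (x y : A) (v : C), box (x + y) v = box x v + box y v)
    (hbox_add_right : ∀ (x : A) (v w : C), box x (v + w) = box x v + box x w)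
    (hbox_smul_left : ∀ (r : ℝ) (x : A) (v : C), box (r • x) v = r • box x v)
    (hbox_smul_right : ∀ (r : ℝ) (x : A) (v : C), box x (r • v) = r • box x v)
    (hbox_leibniz_left : ∀ (f : R) (s : A) (v : C),
      box (f • s) v = f • box s v - (sharpC v) f • pa s)
    (hbox_leibniz_right : ∀ (f : R) (s : A) (v : C),
      box s (f • v) = f • box s v + (anchor s) f • v)
    (conn : Derivation ℝ R R → A → A)
    (hconn_addX : ∀ (X Y : Derivation ℝ R R) (s : A), conn (X + Y) s = conn X s + conn Y s)
    (hconn_smulX : ∀ (f : R) (X : Derivation ℝ R R) (s : A), conn (f • X) s = f • conn X s)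
    (hconn_addS : ∀ (X : Derivation ℝ R R) (s t : A), conn X (s + t) = conn X s + conn X t)
    (hconn_leibniz : ∀ (X : Derivation ℝ R R) (f : R) (s : A), conn X (f • s) = f • conn X s + X f • s)
    (Rbas : A → A → Derivation ℝ R R → A)
    (hRbas : ∀ (s₁ s₂ : A) (X : Derivation ℝ R R),
      Rbas s₁ s₂ X = conn X (br s₁ s₂) - br (conn X s₁) s₂ - br s₁ (conn X s₂)
        - conn (anchor (conn X s₂) + ⁅anchor s₂, X⁆) s₁
        + conn (anchor (conn X s₁) + ⁅anchor s₁, X⁆) s₂)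
    (hsharp_factor : ∀ s : A, anchor s = sharpC (pa s))
    (hbox_anchor : ∀ (s : A) (v : C), sharpC (box s v) = ⁅anchor s, sharpC v⁆)
    (hbox_pa : ∀ s₁ s₂ : A, box s₁ (pa s₂) = pa (br s₁ s₂))
    (hbox_flat : ∀ (s₁ s₂ : A) (v : C),
      box (br s₁ s₂) v = box s₁ (box s₂ v) - box s₂ (box s₁ v))
    (nablaC : A → C → C)
    (hnablaC : ∀ (s : A) (v : C), nablaC s v = box s v + pa (conn (sharpC v) s)) :
    ∀ (s₁ s₂ : A) (v : C),
      nablaC s₁ (nablaC s₂ v) - nablaC s₂ (nablaC s₁ v) - nablaC (br s₁ s₂) v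
        = - pa (Rbas s₁ s₂ (sharpC v)) := by
  intro s₁ s₂ v
  simp only [hnablaC, map_add, hbox_anchor, ← hsharp_factor, hbox_add_right, hbox_pa,
    hbox_flat, hRbas, hconn_addX, map_sub]
  rw [hbr_skew (conn (sharpC v) s₁) s₂]
  simp only [map_neg, map_add]
  abel
end
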